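/- Let n ≥ 1, and let μ_1,…,μ_{n+1} satisfy 2μ_1 ∈ ℕ and μ_{i+1}-μ_i ∈ ℕ, with 2μ_{n+1} even. Then ∑_{s=0}^n (-1)^{n-s}·C(n+s+μ_{s+1}, 2n)·(2s+2μ_{s+1}+1)/(2n+1)·d_{2n+1}(∑_{i=1}^s μ_iε_i + ∑_{i=s+1}^n (μ_{i+1}+1)ε_i) = d_{2n+3}(∑_{i=1}^{n+1} μ_iε_i), where d_{2m+1}(ν) is given by Weyl's dimension formula for type B_m. -/

import Mathlib

/-- Binomial coefficient `C(x, m)` with the convention that it vanishes when `x < m`,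
and otherwise equals the generalized binomial coefficient `x(x-1)⋯(x-m+1)/m!`. -/
noncomputable def cchoose (x : ℚ) (m : ℕ) : ℚ :=
  if x < m then 0 else (∏ i ∈ Finset.range m, (x - i)) / (Nat.factorial m)

/-- Weyl dimension product for the root system `B_n` with positive roots
`{ε_i, ε_j ± ε_i}` and `ρ = (1/2)∑(2i-1)ε_i`, evaluated at the weight `∑ ν_i ε_i`:
`∏_{α∈Φ⁺}(ν+ρ,α)/(ρ,α)`. -/
noncomputable def dimB (n : ℕ) (ν : ℕ → ℚ) : ℚ :=
  (∏ p ∈ (Finset.Icc 1 n ×ˢ Finset.Icc 1 n).filter (fun p => p.1 < p.2),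
      (((ν p.2 + (p.2 : ℚ) - 1/2) - (ν p.1 + (p.1 : ℚ) - 1/2)) *
        ((ν p.2 + (p.2 : ℚ) - 1/2) + (ν p.1 + (p.1 : ℚ) - 1/2))) /
      ((((p.2 : ℚ) - 1/2) - ((p.1 : ℚ) - 1/2)) *
        (((p.2 : ℚ) - 1/2) + ((p.1 : ℚ) - 1/2)))) *
  ∏ i ∈ Finset.Icc 1 n, (ν i + (i : ℚ) - 1/2) / ((i : ℚ) - 1/2)

/-- Weyl dimension product for the root system `D_n` with positive roots
`{ε_j ± ε_i : i < j}` and `ρ = ∑(i-1)ε_i`, evaluated at the weight `∑ ν_i ε_i`. -/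
noncomputable def dimD (n : ℕ) (ν : ℕ → ℚ) : ℚ :=
  ∏ p ∈ (Finset.Icc 1 n ×ˢ Finset.Icc 1 n).filter (fun p => p.1 < p.2),
      (((ν p.2 + (p.2 : ℚ) - 1) - (ν p.1 + (p.1 : ℚ) - 1)) *
        ((ν p.2 + (p.2 : ℚ) - 1) + (ν p.1 + (p.1 : ℚ) - 1))) /
      ((((p.2 : ℚ)) - (p.1 : ℚ)) * (((p.2 : ℚ) - 1) + ((p.1 : ℚ) - 1)))


/-!
Write `d_{2m+1}(ν) = P(ν + ρ) / P(ρ)` with `P(x) = ∏_{i<j} (x_j² - x_i²) · ∏_i x_i`, the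
product being a Vandermonde determinant in the `x_i²`. Put `u = λ + ρ` for `B_{n+1}`; then the
`s`-th weight on the left, shifted by `ρ` of `B_n`, is `u` with `u_s` deleted, and since
`μ_{s+1}` is a natural number, `C(n + s + μ_{s+1}, 2n) = ∏_{k<n} (u_s² - (k + 1/2)²) / (2n)!`.
Replacing the columns `x^j` of the Vandermonde matrix by the monic polynomials
`∏_{k<j} (x - (k + 1/2)²)` and expanding along the last column gives exactly the alternating sum.
The same expansion at `u = ρ`, where only the last term survives, gives
`P(ρ_{n+1}) = (2n)! (n + 1/2) P(ρ_n)`, which matches the normalisations.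
-/

open Finset Polynomial Matrix
open scoped Nat

section PosRootProd

variable {R : Type*} [CommRing R]

theorem det_of_prod_sub_eq_det_vandermonde {m : ℕ} (v : Fin m → R) (a : ℕ → R) :
    (Matrix.of fun i j : Fin m => ∏ k ∈ range j, (v i - a k)).det = (vandermonde v).det := by
  nontriviality R
  have hmonic (j : Fin m) : (∏ k ∈ range j, (X - C (a k))).Monic :=
    monic_prod_of_monic _ _ fun k _ => monic_X_sub_C (a k)
  rw [det_eval_matrixOfPolynomials_eq_det_vandermonde v (fun j => ∏ k ∈ range j, (X - C (a k)))
    (fun j => by simp [natDegree_prod_of_monic _ _ fun k _ => monic_X_sub_C (a k)]) hmonic]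
  simp [eval_prod]

theorem det_vandermonde_eq_sum_succAbove {m : ℕ} (v : Fin (m + 1) → R) (a : ℕ → R) :
    (vandermonde v).det = ∑ s : Fin (m + 1),
      (-1) ^ (s + m : ℕ) * (∏ k ∈ range m, (v s - a k)) * (vandermonde (v ∘ s.succAbove)).det := by
  rw [← det_of_prod_sub_eq_det_vandermonde v a, det_succ_column _ (Fin.last m)]
  refine sum_congr rfl fun s _ => ?_
  rw [← det_of_prod_sub_eq_det_vandermonde _ a, Fin.succAbove_last]
  rfl

/-- `∏_{α ∈ Φ⁺(B_m)} (x, α) = ∏_{i<j} (x_j² - x_i²) · ∏_i x_i` for `x = ∑ x_i ε_i`. -/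
def posRootProdB {m : ℕ} (x : Fin m → R) : R :=
  (vandermonde fun i => x i ^ 2).det * ∏ i, x i

theorem posRootProdB_eq_sum_succAbove {m : ℕ} (x : Fin (m + 1) → R) (a : ℕ → R) :
    posRootProdB x = ∑ s : Fin (m + 1), (-1) ^ (s + m : ℕ) *
      (∏ k ∈ range m, (x s ^ 2 - a k)) * x s * posRootProdB (x ∘ s.succAbove) := by
  rw [posRootProdB, det_vandermonde_eq_sum_succAbove _ a, sum_mul]
  refine sum_congr rfl fun s _ => ?_
  rw [posRootProdB, Fin.prod_univ_succAbove _ s]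
  simp only [Function.comp_def]
  ring

end PosRootProd

def rhoB (m : ℕ) : Fin m → ℚ := fun i => i + 1 / 2

/-- The coordinates of `ν + ρ`: the weight `ν = ∑ ν_i ε_i` is indexed from `1`, as in `dimB`,
while `Fin m` is indexed from `0`. -/
def addRhoB (m : ℕ) (ν : ℕ → ℚ) : Fin m → ℚ := fun i => ν (i + 1) + rhoB m i

theorem addRhoB_zero (m : ℕ) : addRhoB m 0 = rhoB m := by
  funext i
  simp [addRhoB]

theorem prod_Icc_one_eq_prod_fin {M : Type*} [CommMonoid M] (m : ℕ) (f : ℕ → M) :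
    ∏ i ∈ Icc 1 m, f i = ∏ i : Fin m, f (i + 1) := by
  rw [Fin.prod_univ_eq_prod_range (fun i => f (i + 1)), ← Ico_add_one_right_eq_Icc,
    prod_Ico_eq_prod_range]
  simp [add_comm]

theorem prod_filter_lt_Icc_one_eq_prod_fin {M : Type*} [CommMonoid M] (m : ℕ) (f : ℕ × ℕ → M) :
    ∏ p ∈ (Icc 1 m ×ˢ Icc 1 m).filter (fun p => p.1 < p.2), f p =
      ∏ i : Fin m, ∏ j ∈ Ioi i, f (i + 1, j + 1) := by
  rw [prod_sigma']
  symm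
  refine prod_nbij (fun x => ((x.1 : ℕ) + 1, (x.2 : ℕ) + 1)) ?_ ?_ ?_ (fun _ _ => rfl)
  · rintro ⟨i, j⟩ h
    simp only [mem_sigma, mem_Ioi, Fin.lt_def] at h
    simp only [mem_filter, mem_product, mem_Icc]
    omega
  · rintro ⟨i, j⟩ - ⟨i', j'⟩ - h
    simp only [Prod.mk.injEq, add_left_inj, Fin.val_inj] at h
    obtain ⟨rfl, rfl⟩ := h
    rfl
  · rintro ⟨a, b⟩ h
    simp only [coe_filter, mem_product, mem_Icc, Set.mem_ofPred_eq] at h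
    refine ⟨⟨⟨a - 1, by omega⟩, ⟨b - 1, by omega⟩⟩, ?_, ?_⟩
    · simp only [coe_sigma, Set.mem_sigma_iff, mem_coe, mem_univ, mem_Ioi, Fin.lt_def, true_and]
      omega
    · simp only [Prod.mk.injEq]
      omega

theorem posRootProdB_addRhoB (m : ℕ) (ν : ℕ → ℚ) :
    posRootProdB (addRhoB m ν) =
      (∏ p ∈ (Icc 1 m ×ˢ Icc 1 m).filter (fun p => p.1 < p.2),
        ((ν p.2 + (p.2 : ℚ) - 1/2) - (ν p.1 + (p.1 : ℚ) - 1/2)) *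
          ((ν p.2 + (p.2 : ℚ) - 1/2) + (ν p.1 + (p.1 : ℚ) - 1/2))) *
      ∏ i ∈ Icc 1 m, (ν i + (i : ℚ) - 1/2) := by
  rw [posRootProdB, det_vandermonde, prod_filter_lt_Icc_one_eq_prod_fin, prod_Icc_one_eq_prod_fin]
  congr 1
  · refine prod_congr rfl fun i _ => prod_congr rfl fun j _ => ?_
    simp only [addRhoB, rhoB]
    push_cast
    ring
  · refine prod_congr rfl fun i _ => ?_
    simp only [addRhoB, rhoB]
    push_cast
    ring

theorem dimB_eq_div (m : ℕ) (ν : ℕ → ℚ) :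
    dimB m ν = posRootProdB (addRhoB m ν) / posRootProdB (rhoB m) := by
  rw [dimB, prod_div_distrib, prod_div_distrib, div_mul_div_comm, posRootProdB_addRhoB,
    ← addRhoB_zero, posRootProdB_addRhoB]
  simp only [Pi.zero_apply, zero_add]

theorem addRhoB_comp_succAbove (n : ℕ) (μ : ℕ → ℚ) (s : Fin (n + 1)) :
    addRhoB (n + 1) μ ∘ s.succAbove =
      addRhoB n (fun i => if i ≤ s then μ i else μ (i + 1) + 1) := by
  funext t
  simp only [addRhoB, rhoB, Function.comp_apply]
  rcases lt_or_ge t.castSucc s with h | h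
  · rw [Fin.succAbove_of_castSucc_lt _ _ h, if_pos (by rw [Fin.lt_def] at h; simpa using h)]
    simp
  · rw [Fin.succAbove_of_le_castSucc _ _ h, if_neg (by rw [Fin.le_def] at h; simpa using h)]
    simp only [Fin.val_succ, Nat.cast_add, Nat.cast_one]
    ring

theorem prod_range_two_mul_sub_eq_prod_sq_sub (x : ℚ) (n : ℕ) :
    ∏ i ∈ range (2 * n), (x + n - 1/2 - i) = ∏ k ∈ range n, (x ^ 2 - ((k : ℚ) + 1/2) ^ 2) := by
  have hlow : ∏ i ∈ range n, (x + n - 1/2 - i) = ∏ k ∈ range n, (x + k + 1/2) := by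
    rw [← prod_range_reflect (fun k => x + k + 1/2) n]
    refine prod_congr rfl fun i hi => ?_
    rw [Nat.cast_sub (by simp at hi; omega), Nat.cast_sub (by simp at hi; omega)]
    push_cast
    ring
  rw [two_mul, prod_range_add, hlow, ← prod_mul_distrib]
  refine prod_congr rfl fun k _ => ?_
  push_cast
  ring

theorem prod_range_natCast_sub (N : ℕ) : ∏ i ∈ range N, ((N : ℚ) - i) = N ! := by
  rw [← descPochhammer_eval_eq_prod_range, descPochhammer_eval_eq_descFactorial,
    Nat.descFactorial_self]

theorem cchoose_natCast (b m : ℕ) : cchoose b m = (∏ i ∈ range m, ((b : ℚ) - i)) / m ! := by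
  rw [cchoose, ite_eq_right_iff]
  intro hb
  rw [← descPochhammer_eval_eq_prod_range, descPochhammer_eval_eq_descFactorial,
    Nat.descFactorial_eq_zero_iff_lt.mpr (by exact_mod_cast hb)]
  simp

theorem posRootProdB_rhoB_succ (m : ℕ) :
    posRootProdB (rhoB (m + 1)) = ((2 * m) ! : ℚ) * ((m : ℚ) + 1/2) * posRootProdB (rhoB m) := by
  rw [posRootProdB_eq_sum_succAbove _ fun k : ℕ => ((k : ℚ) + 1/2) ^ 2,
    sum_eq_single (Fin.last m)]
  · have hfac :
        ∏ k ∈ range m, (((m : ℚ) + 1/2) ^ 2 - ((k : ℚ) + 1/2) ^ 2) = ((2 * m) ! : ℚ) := by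
      rw [← prod_range_two_mul_sub_eq_prod_sq_sub, ← prod_range_natCast_sub]
      push_cast
      ring_nf
    have hcomp : rhoB (m + 1) ∘ (Fin.last m).succAbove = rhoB m := by
      funext i
      simp [rhoB, Fin.succAbove_last]
    simp only [rhoB, Fin.val_last, ← two_mul, pow_mul, neg_one_sq, one_pow, one_mul]
    rw [hfac, hcomp]
  · intro s _ hs
    have hsm : (s : ℕ) < m := Fin.val_lt_last hs
    rw [prod_eq_zero (mem_range.mpr hsm) (by simp [rhoB]), mul_zero, zero_mul, zero_mul]
  · simp

theorem posRootProdB_rhoB_ne_zero (m : ℕ) : posRootProdB (rhoB m) ≠ 0 := by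
  induction m with
  | zero => simp [posRootProdB]
  | succ m ih =>
    rw [posRootProdB_rhoB_succ]
    exact mul_ne_zero (mul_ne_zero (by positivity) (by positivity)) ih

theorem exists_natCast_sub_of_le {n : ℕ} {μ : ℕ → ℚ}
    (hdom : ∀ i : ℕ, 1 ≤ i → i ≤ n → ∃ m : ℕ, μ (i + 1) - μ i = m)
    {i j : ℕ} (hi : 1 ≤ i) (hij : i ≤ j) (hj : j ≤ n + 1) : ∃ d : ℕ, μ j - μ i = d := by
  induction j, hij using Nat.le_induction with
  | base => exact ⟨0, by simp⟩
  | succ j hij ih =>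
    obtain ⟨d, hd⟩ := ih (by omega)
    obtain ⟨e, he⟩ := hdom j (by omega) (by omega)
    exact ⟨e + d, by push_cast; linarith⟩

theorem exists_natCast_of_dominant {n : ℕ} {μ : ℕ → ℚ} (h1 : 0 ≤ μ 1)
    (hdom : ∀ i : ℕ, 1 ≤ i → i ≤ n → ∃ m : ℕ, μ (i + 1) - μ i = m)
    (htop : ∃ m : ℕ, μ (n + 1) = m) {i : ℕ} (hi : 1 ≤ i) (hin : i ≤ n + 1) :
    ∃ b : ℕ, μ i = b := by
  obtain ⟨m, hm⟩ := htop
  obtain ⟨d, hd⟩ := exists_natCast_sub_of_le hdom hi hin le_rfl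
  obtain ⟨d', hd'⟩ := exists_natCast_sub_of_le hdom le_rfl hi hin
  have hdm : d ≤ m := by
    have : (0 : ℚ) ≤ d' := d'.cast_nonneg
    exact_mod_cast (show (d : ℚ) ≤ m by linarith)
  exact ⟨m - d, by push_cast [hdm]; linarith⟩

theorem macdonaldB_summand_eq (n : ℕ) (μ : ℕ → ℚ) (s : Fin (n + 1))
    (hs : ∃ b : ℕ, μ (s + 1) = b) :
    (-1 : ℚ) ^ (n - s) * cchoose ((n : ℚ) + (s : ℚ) + μ (s + 1)) (2 * n) *
        ((2 * (s : ℚ) + 2 * μ (s + 1) + 1) / (2 * (n : ℚ) + 1)) *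
        dimB n (fun i => if i ≤ s then μ i else μ (i + 1) + 1) =
      (-1) ^ (s + n : ℕ) * (∏ k ∈ range n, (addRhoB (n + 1) μ s ^ 2 - ((k : ℚ) + 1/2) ^ 2)) *
        addRhoB (n + 1) μ s * posRootProdB (addRhoB (n + 1) μ ∘ s.succAbove) /
        posRootProdB (rhoB (n + 1)) := by
  obtain ⟨b, hb⟩ := hs
  have hsign : (-1 : ℚ) ^ (n - s) = (-1) ^ (s + n : ℕ) := by
    rw [show (s : ℕ) + n = n - s + 2 * s by omega, pow_add, pow_mul]
    simp
  have hu : addRhoB (n + 1) μ s = b + s + 1/2 := by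
    simp only [addRhoB, rhoB, hb]
    ring
  have hchoose : cchoose ((n : ℚ) + (s : ℚ) + μ (s + 1)) (2 * n) =
      (∏ k ∈ range n, (addRhoB (n + 1) μ s ^ 2 - ((k : ℚ) + 1/2) ^ 2)) / (2 * n) ! := by
    rw [← prod_range_two_mul_sub_eq_prod_sq_sub, hb, hu,
      show (n : ℚ) + s + b = ((n + s + b : ℕ) : ℚ) by push_cast; ring, cchoose_natCast]
    push_cast
    ring_nf
  rw [hsign, hchoose, hb, dimB_eq_div, ← addRhoB_comp_succAbove, posRootProdB_rhoB_succ, hu]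
  have := posRootProdB_rhoB_ne_zero n
  field_simp
  ring

theorem macdonald_analogue_B_even_general (n : ℕ) (μ : ℕ → ℚ)
    (h1 : ∃ a : ℕ, 2 * μ 1 = a)
    (hdom : ∀ i : ℕ, 1 ≤ i → i ≤ n → ∃ m : ℕ, μ (i + 1) - μ i = m)
    (heven : ∃ m : ℕ, 2 * μ (n + 1) = 2 * m) :
    ∑ s ∈ Finset.range (n + 1), (-1 : ℚ) ^ (n - s) *
        cchoose ((n : ℚ) + (s : ℚ) + μ (s + 1)) (2 * n) *
        ((2 * (s : ℚ) + 2 * μ (s + 1) + 1) / (2 * (n : ℚ) + 1)) *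
        dimB n (fun i => if i ≤ s then μ i else μ (i + 1) + 1) =
      dimB (n + 1) μ := by
  have hμ1 : 0 ≤ μ 1 := by
    obtain ⟨a, ha⟩ := h1
    linarith [a.cast_nonneg (α := ℚ)]
  have htop : ∃ m : ℕ, μ (n + 1) = m := by
    obtain ⟨m, hm⟩ := heven
    exact ⟨m, by linarith⟩
  rw [← Fin.sum_univ_eq_sum_range, sum_congr rfl fun s _ => macdonaldB_summand_eq n μ s
      (exists_natCast_of_dominant hμ1 hdom htop (by omega) (by omega)), ← sum_div,
    ← posRootProdB_eq_sum_succAbove, dimB_eq_div]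

/-- For a dominant integral weight `λ = ∑ μ_i ε_i` of `o(2n+3)` with `2μ_{n+1}` even,
`∑_{s=0}^{n}(-1)^{n-s} C(n+s+μ_{s+1}, 2n) (2s+2μ_{s+1}+1)/(2n+1)
  · d_{2n+1}(∑_{i≤s} μ_i ε_i + ∑_{i>s}(μ_{i+1}+1) ε_i) = d_{2n+3}(λ)`. -/
theorem macdonald_analogue_B_even (n : ℕ) (hn : 1 ≤ n) (μ : ℕ → ℚ)
    (h1 : ∃ a : ℕ, 2 * μ 1 = a)
    (hdom : ∀ i : ℕ, 1 ≤ i → i ≤ n → ∃ m : ℕ, μ (i + 1) - μ i = m)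
    (heven : ∃ m : ℕ, 2 * μ (n + 1) = 2 * m) :
    ∑ s ∈ Finset.range (n + 1), (-1 : ℚ) ^ (n - s) *
        cchoose ((n : ℚ) + (s : ℚ) + μ (s + 1)) (2 * n) *
        ((2 * (s : ℚ) + 2 * μ (s + 1) + 1) / (2 * (n : ℚ) + 1)) *
        dimB n (fun i => if i ≤ s then μ i else μ (i + 1) + 1) =
      dimB (n + 1) μ :=
  macdonald_analogue_B_even_general n μ h1 hdom heven
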